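/- Let 𝖯 be a lattice in ℝ² (a subgroup generated by an ℝ-basis of ℝ²) and let 𝖭 := {x ∈ ℝ² : [x, p] ∈ ℤ for all p ∈ 𝖯} be its dual lattice, so that the standard inner product [·,·] is a principal polarization on the real torus ℝ²/𝖯 with integral structure 𝖭. Then the following are equivalent: (i) 𝖯 admits a ℤ-basis q₁, q₂ with [q₁, q₂] = 0; (ii) the principally polarized tropical abelian surface (ℝ²/𝖯, [·,·]) is of product type, i.e., there exist a linear isomorphism h : ℝ² → ℝ² and real numbers ϖ₁, ϖ₂ > 0 such that h(𝖯) = ϖ₁ℤ × ϖ₂ℤ, h(𝖭) = ℤ × ℤ, and [x, y] = (hx)₁(hy)₁/ϖ₁ + (hx)₂(hy)₂/ϖ₂ for all x, y ∈ ℝ² (so that (ℝ²/𝖯, [·,·]) is isomorphic to the product of the principally polarized tropical elliptic curves (ℝ/ϖᵢℤ, xy/ϖᵢ), i = 1, 2). (Condition (i) fails exactly when the Voronoi cell of 𝖯 is a hexagon, so this is the statement that (ℝ²/𝖯, [·,·]) is irreducible if and only if the Voronoi cell of 𝖯 is a hexagon.) -/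
import Mathlib


/-!
STATEMENT 6: For a lattice `𝖯 = ℤu + ℤv` in `ℝ²` with dual lattice
`𝖭 = {x : [x, p] ∈ ℤ for all p ∈ 𝖯}`, the following are equivalent:
(i) `𝖯` admits a ℤ-basis `q₁, q₂` with `[q₁, q₂] = 0`;
(ii) `(ℝ²/𝖯, [·,·])` is of product type: there are a linear isomorphism `h : ℝ² → ℝ²` and
`ϖ₁, ϖ₂ > 0` with `h(𝖯) = ϖ₁ℤ × ϖ₂ℤ`, `h(𝖭) = ℤ × ℤ`, and
`[x, y] = (hx)₁(hy)₁/ϖ₁ + (hx)₂(hy)₂/ϖ₂` for all `x, y`.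
-/

noncomputable section

/-- The standard inner product on `ℝ × ℝ`. -/
def ip (x y : ℝ × ℝ) : ℝ := x.1 * y.1 + x.2 * y.2

/-- The lattice `ℤu + ℤv` as a subset of `ℝ × ℝ`. -/
def lat (u v : ℝ × ℝ) : Set (ℝ × ℝ) :=
  {p | ∃ m n : ℤ, p = (m : ℝ) • u + (n : ℝ) • v}

/-- The dual lattice of a subset of `ℝ × ℝ` with respect to the standard inner product. -/
def dualLat (S : Set (ℝ × ℝ)) : Set (ℝ × ℝ) :=
  {x | ∀ p ∈ S, ∃ k : ℤ, ip x p = (k : ℝ)}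

lemma ip_lin (x p q : ℝ × ℝ) (a b : ℝ) :
    ip x (a • p + b • q) = a * ip x p + b * ip x q := by
  simp [ip]; ring

lemma ip_expand (p q : ℝ × ℝ) (a b c d : ℝ) :
    ip (a • p + b • q) (c • p + d • q)
      = a * c * ip p p + (a * d + b * c) * ip p q + b * d * ip q q := by
  simp [ip]; ring

theorem product_type_iff_orthogonal_basis
    (u v : ℝ × ℝ) (hindep : LinearIndependent ℝ ![u, v]) :
    (∃ q₁ q₂ : ℝ × ℝ, lat u v = lat q₁ q₂ ∧ ip q₁ q₂ = 0)
      ↔ (∃ (h : (ℝ × ℝ) ≃ₗ[ℝ] ℝ × ℝ) (ϖ₁ ϖ₂ : ℝ), 0 < ϖ₁ ∧ 0 < ϖ₂ ∧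
          ⇑h '' lat u v = {p : ℝ × ℝ | ∃ m n : ℤ, p = ((m : ℝ) * ϖ₁, (n : ℝ) * ϖ₂)} ∧
          ⇑h '' dualLat (lat u v) = {p : ℝ × ℝ | ∃ m n : ℤ, p = ((m : ℝ), (n : ℝ))} ∧
          ∀ x y : ℝ × ℝ,
            ip x y = (h x).1 * (h y).1 / ϖ₁ + (h x).2 * (h y).2 / ϖ₂) := by
  constructor
  · rintro ⟨q₁, q₂, hlat, horth⟩
    -- span of {u, v} is everything
    have hcard : Fintype.card (Fin 2) = Module.finrank ℝ (ℝ × ℝ) := by simp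
    have hspanuv : Submodule.span ℝ {u, v} = ⊤ := by
      have := hindep.span_eq_top_of_card_eq_finrank hcard
      rwa [show Set.range ![u, v] = {u, v} by
        simp [Matrix.range_cons, Matrix.range_empty, Set.pair_comm v u]] at this
    -- hence span of {q₁, q₂} is everything
    have hspan : Submodule.span ℝ {q₁, q₂} = ⊤ := by
      rw [eq_top_iff, ← hspanuv, Submodule.span_le]
      rintro x (rfl | rfl)
      · have : x ∈ lat q₁ q₂ := hlat ▸ ⟨1, 0, by simp⟩
        obtain ⟨m, n, rfl⟩ := this
        exact Submodule.add_mem _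
          (Submodule.smul_mem _ _ (Submodule.subset_span (by simp)))
          (Submodule.smul_mem _ _ (Submodule.subset_span (by simp)))
      · have : x ∈ lat q₁ q₂ := hlat ▸ ⟨0, 1, by simp⟩
        obtain ⟨m, n, rfl⟩ := this
        exact Submodule.add_mem _
          (Submodule.smul_mem _ _ (Submodule.subset_span (by simp)))
          (Submodule.smul_mem _ _ (Submodule.subset_span (by simp)))
    have hmem : ∀ x : ℝ × ℝ, ∃ a b : ℝ, a • q₁ + b • q₂ = x := by
      intro x
      have : x ∈ Submodule.span ℝ {q₁, q₂} := hspan ▸ Submodule.mem_top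
      exact Submodule.mem_span_pair.mp this
    set ϖ₁ : ℝ := ip q₁ q₁ with hϖ₁def
    set ϖ₂ : ℝ := ip q₂ q₂ with hϖ₂def
    -- the linear map
    set f : (ℝ × ℝ) →ₗ[ℝ] (ℝ × ℝ) :=
      { toFun := fun x => (ip x q₁, ip x q₂)
        map_add' := by intro x y; simp [ip]; constructor <;> ring
        map_smul' := by intro c x; simp [ip]; constructor <;> ring } with hfdef
    have hfq1 : f q₁ = (ϖ₁, 0) := by
      simp only [hfdef, LinearMap.coe_mk, AddHom.coe_mk, horth, hϖ₁def]
    have hfq2 : f q₂ = (0, ϖ₂) := by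
      have : ip q₂ q₁ = 0 := by simpa [ip, mul_comm] using horth
      simp only [hfdef, LinearMap.coe_mk, AddHom.coe_mk, this, hϖ₂def]
    have hf : ∀ a b : ℝ, f (a • q₁ + b • q₂) = (a * ϖ₁, b * ϖ₂) := by
      intro a b
      simp [map_add, map_smul, hfq1, hfq2, Prod.ext_iff]
    have hinj : Function.Injective f := by
      rw [injective_iff_map_eq_zero]
      intro x hx
      have h1 : ip x q₁ = 0 := congrArg Prod.fst hx
      have h2 : ip x q₂ = 0 := congrArg Prod.snd hx
      obtain ⟨a, b, hab⟩ := hmem x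
      have h0 : ip x x = 0 := by
        nth_rewrite 2 [← hab]
        rw [ip_lin, h1, h2]; ring
      have : x.1 * x.1 + x.2 * x.2 = 0 := h0
      have hx1 : x.1 = 0 := by nlinarith [mul_self_nonneg x.1, mul_self_nonneg x.2]
      have hx2 : x.2 = 0 := by nlinarith [mul_self_nonneg x.1, mul_self_nonneg x.2]
      exact Prod.ext hx1 hx2
    have hsurj : Function.Surjective f := LinearMap.injective_iff_surjective.mp hinj
    set h : (ℝ × ℝ) ≃ₗ[ℝ] (ℝ × ℝ) := LinearEquiv.ofBijective f ⟨hinj, hsurj⟩ with hhdef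
    have hcoe : ⇑h = ⇑f := rfl
    -- positivity of ϖ₁, ϖ₂
    have hq1ne : q₁ ≠ 0 := by
      obtain ⟨x, hx⟩ := hsurj (1, 0)
      intro hq
      have : ip x q₁ = 1 := congrArg Prod.fst hx
      rw [hq] at this; simp [ip] at this
    have hq2ne : q₂ ≠ 0 := by
      obtain ⟨x, hx⟩ := hsurj (0, 1)
      intro hq
      have : ip x q₂ = 1 := congrArg Prod.snd hx
      rw [hq] at this; simp [ip] at this
    have hϖpos : ∀ q : ℝ × ℝ, q ≠ 0 → 0 < ip q q := by
      intro q hq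
      have : q.1 ≠ 0 ∨ q.2 ≠ 0 := by
        by_contra hc
        push_neg at hc
        exact hq (Prod.ext hc.1 hc.2)
      rcases this with hne | hne
      · have := mul_self_pos.mpr hne
        have := mul_self_nonneg q.2
        simp only [ip]; linarith
      · have := mul_self_pos.mpr hne
        have := mul_self_nonneg q.1
        simp only [ip]; linarith
    have hϖ₁pos : 0 < ϖ₁ := hϖpos q₁ hq1ne
    have hϖ₂pos : 0 < ϖ₂ := hϖpos q₂ hq2ne
    refine ⟨h, ϖ₁, ϖ₂, hϖ₁pos, hϖ₂pos, ?_, ?_, ?_⟩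
    · -- image of the lattice
      ext z
      constructor
      · rintro ⟨x, hx, rfl⟩
        rw [hlat] at hx
        obtain ⟨m, n, rfl⟩ := hx
        exact ⟨m, n, by rw [hcoe, hf]⟩
      · rintro ⟨m, n, rfl⟩
        refine ⟨(m : ℝ) • q₁ + (n : ℝ) • q₂, ?_, by rw [hcoe, hf]⟩
        rw [hlat]; exact ⟨m, n, rfl⟩
    · -- image of the dual lattice
      ext z
      constructor
      · rintro ⟨x, hx, rfl⟩
        obtain ⟨k₁, hk₁⟩ := hx q₁ (hlat ▸ ⟨1, 0, by simp⟩)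
        obtain ⟨k₂, hk₂⟩ := hx q₂ (hlat ▸ ⟨0, 1, by simp⟩)
        exact ⟨k₁, k₂, by rw [hcoe]; exact Prod.ext hk₁ hk₂⟩
      · rintro ⟨m, n, rfl⟩
        obtain ⟨x, hx⟩ := hsurj ((m : ℝ), (n : ℝ))
        have hx1 : ip x q₁ = (m : ℝ) := congrArg Prod.fst hx
        have hx2 : ip x q₂ = (n : ℝ) := congrArg Prod.snd hx
        refine ⟨x, ?_, by rw [hcoe]; exact hx⟩
        intro p hp
        rw [hlat] at hp
        obtain ⟨a, b, rfl⟩ := hp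
        exact ⟨a * m + b * n, by rw [ip_lin, hx1, hx2]; push_cast; ring⟩
    · -- the inner product formula
      intro x y
      obtain ⟨a, b, hab⟩ := hmem x
      obtain ⟨c, d, hcd⟩ := hmem y
      have hx : h x = (a * ϖ₁, b * ϖ₂) := by rw [hcoe, ← hab, hf]
      have hy : h y = (c * ϖ₁, d * ϖ₂) := by rw [hcoe, ← hcd, hf]
      rw [← hab, ← hcd, ip_expand, horth, hab, hcd, hx, hy]
      field_simp
      ring
  · rintro ⟨h, ϖ₁, ϖ₂, hϖ₁, hϖ₂, hlatim, -, hip⟩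
    refine ⟨h.symm (ϖ₁, 0), h.symm (0, ϖ₂), ?_, ?_⟩
    · ext p
      constructor
      · intro hp
        have : h p ∈ ⇑h '' lat u v := ⟨p, hp, rfl⟩
        rw [hlatim] at this
        obtain ⟨m, n, hmn⟩ := this
        refine ⟨m, n, ?_⟩
        have : p = h.symm ((m : ℝ) * ϖ₁, (n : ℝ) * ϖ₂) := by
          rw [← hmn]; exact (h.symm_apply_apply p).symm
        rw [this, show (((m : ℝ) * ϖ₁, (n : ℝ) * ϖ₂) : ℝ × ℝ)
            = (m : ℝ) • ((ϖ₁, 0) : ℝ × ℝ) + (n : ℝ) • ((0, ϖ₂) : ℝ × ℝ) by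
          simp [Prod.ext_iff], map_add, map_smul, map_smul]
      · rintro ⟨m, n, rfl⟩
        have hmem : h ((m : ℝ) • h.symm (ϖ₁, 0) + (n : ℝ) • h.symm (0, ϖ₂))
            = (((m : ℝ) * ϖ₁, (n : ℝ) * ϖ₂) : ℝ × ℝ) := by
          rw [map_add, map_smul, map_smul, h.apply_symm_apply, h.apply_symm_apply]
          simp [Prod.ext_iff]
        have : h ((m : ℝ) • h.symm (ϖ₁, 0) + (n : ℝ) • h.symm (0, ϖ₂)) ∈ ⇑h '' lat u v := by
          rw [hlatim, hmem]; exact ⟨m, n, rfl⟩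
        obtain ⟨x, hx, hxp⟩ := this
        rwa [← h.injective hxp]
    · rw [hip]
      simp [h.apply_symm_apply]
end
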